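/- For every M ∈ 𝒮_{𝒢†} and every vector x ∈ ℝ^P, the quadratic-loss decomposition (x − Γx)ᵀ M (x − Γx) = (x − Γ†x)ᵀ M (x − Γ†x) + (Γ†x − Γx)ᵀ M (Γ†x − Γx) holds. -/
import Mathlib


open Matrix Finset

abbrev PairIdx (d : ℕ) := {p : Fin d × Fin d // p.1 < p.2}

/-- Pairs `r` and `s` lie in the same block: the unordered pairs of cluster labels coincide. -/
def sameBlock {d K : ℕ} (g : Fin d → Fin K) (r s : PairIdx d) : Prop :=
  (g r.1.1 = g s.1.1 ∧ g r.1.2 = g s.1.2) ∨ (g r.1.1 = g s.1.2 ∧ g r.1.2 = g s.1.1)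

instance {d K : ℕ} (g : Fin d → Fin K) : DecidableRel (sameBlock g) :=
  fun r s => by unfold sameBlock; infer_instance

/-- The overlap type `φ̄(r,s)`: the multiset of cluster labels of the elements of
`{i_r, j_r} ∩ {i_s, j_s}`.  The empty multiset encodes the type `(0,0)`, the singleton
`{k}` encodes `(0,k)`, and the two-element multiset `{k₁,k₂}` encodes
`(min(k₁,k₂), max(k₁,k₂))`. -/
def overlap {d K : ℕ} (g : Fin d → Fin K) (r s : PairIdx d) : Multiset (Fin K) :=
  (({r.1.1, r.1.2} ∩ {s.1.1, s.1.2} : Finset (Fin d)).val.map g)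

/-- The cardinality of the block containing `r`. -/
def blockCard {d K : ℕ} (g : Fin d → Fin K) (r : PairIdx d) : ℕ :=
  (Finset.univ.filter (fun t => sameBlock g r t)).card

/-- The blockwise-averaging matrix `Γ`. -/
noncomputable def Gamma {d K : ℕ} (g : Fin d → Fin K) :
    Matrix (PairIdx d) (PairIdx d) ℝ :=
  Matrix.of fun r s => if sameBlock g r s then (1 : ℝ) / (blockCard g r) else 0

/-- Membership in the class `𝒮_𝒢`. -/
def inSG {d K : ℕ} (g : Fin d → Fin K) (S : Matrix (PairIdx d) (PairIdx d) ℝ) : Prop :=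
  S.IsSymm ∧ ∀ r r' s s' : PairIdx d, sameBlock g r r' → sameBlock g s s' →
    overlap g r s = overlap g r' s' → S r s = S r' s'

section Aux

variable {d K : ℕ}

lemma sb_refl (g : Fin d → Fin K) (r : PairIdx d) : sameBlock g r r := Or.inl ⟨rfl, rfl⟩

lemma sb_symm {g : Fin d → Fin K} {r s : PairIdx d} (h : sameBlock g r s) :
    sameBlock g s r := by
  rcases h with ⟨h1, h2⟩ | ⟨h1, h2⟩
  · exact Or.inl ⟨h1.symm, h2.symm⟩
  · exact Or.inr ⟨h2.symm, h1.symm⟩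

lemma sb_trans {g : Fin d → Fin K} {r s t : PairIdx d} (h : sameBlock g r s)
    (h' : sameBlock g s t) : sameBlock g r t := by
  rcases h with ⟨h1, h2⟩ | ⟨h1, h2⟩ <;> rcases h' with ⟨h3, h4⟩ | ⟨h3, h4⟩
  · exact Or.inl ⟨h1.trans h3, h2.trans h4⟩
  · exact Or.inr ⟨h1.trans h3, h2.trans h4⟩
  · exact Or.inr ⟨h1.trans h4, h2.trans h3⟩
  · exact Or.inl ⟨h1.trans h4, h2.trans h3⟩

lemma filter_sb_eq {g : Fin d → Fin K} {r s : PairIdx d} (h : sameBlock g r s) :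
    Finset.univ.filter (fun t => sameBlock g r t)
      = Finset.univ.filter (fun t => sameBlock g s t) := by
  ext t
  simp only [Finset.mem_filter, Finset.mem_univ, true_and]
  exact ⟨fun ht => sb_trans (sb_symm h) ht, fun ht => sb_trans h ht⟩

lemma blockCard_eq {g : Fin d → Fin K} {r s : PairIdx d} (h : sameBlock g r s) :
    blockCard g r = blockCard g s := by
  unfold blockCard; rw [filter_sb_eq h]

lemma blockCard_pos (g : Fin d → Fin K) (r : PairIdx d) : 0 < blockCard g r :=
  Finset.card_pos.mpr ⟨r, Finset.mem_filter.mpr ⟨Finset.mem_univ r, sb_refl g r⟩⟩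

lemma gamma_transpose (g : Fin d → Fin K) : (Gamma g)ᵀ = Gamma g := by
  ext r s
  simp only [Matrix.transpose_apply, Gamma, Matrix.of_apply]
  by_cases h : sameBlock g r s
  · rw [if_pos (sb_symm h), if_pos h, ← blockCard_eq h]
  · rw [if_neg (fun hc => h (sb_symm hc)), if_neg h]

lemma gamma_fix {g : Fin d → Fin K} {z : PairIdx d → ℝ}
    (hz : ∀ r s, sameBlock g r s → z r = z s) :
    (Gamma g).mulVec z = z := by
  funext r
  have hpos := blockCard_pos g r
  have hne : (blockCard g r : ℝ) ≠ 0 := Nat.cast_ne_zero.mpr hpos.ne'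
  simp only [Matrix.mulVec, dotProduct, Gamma, Matrix.of_apply]
  calc ∑ t, (if sameBlock g r t then (1 : ℝ) / (blockCard g r) else 0) * z t
      = ∑ t, (if sameBlock g r t then (1 / (blockCard g r : ℝ)) * z r else 0) := by
        refine Finset.sum_congr rfl fun t _ => ?_
        by_cases h : sameBlock g r t
        · rw [if_pos h, if_pos h, ← hz r t h]
        · rw [if_neg h, if_neg h, zero_mul]
    _ = (blockCard g r : ℝ) * ((1 / (blockCard g r : ℝ)) * z r) := by
        rw [← Finset.sum_filter]
        rw [Finset.sum_const, nsmul_eq_mul]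
        rfl
    _ = z r := by
        rw [← mul_assoc, mul_one_div_cancel hne, one_mul]

lemma gamma_bc {g : Fin d → Fin K} (z : PairIdx d → ℝ) {r s : PairIdx d}
    (h : sameBlock g r s) : (Gamma g).mulVec z r = (Gamma g).mulVec z s := by
  simp only [Matrix.mulVec, dotProduct, Gamma, Matrix.of_apply]
  refine Finset.sum_congr rfl fun t _ => ?_
  by_cases ht : sameBlock g r t
  · rw [if_pos ht, if_pos (sb_trans (sb_symm h) ht), ← blockCard_eq h]
  · rw [if_neg ht, if_neg (fun hc => ht (sb_trans h hc))]

lemma gamma_dot_comm (g : Fin d → Fin K) (u w : PairIdx d → ℝ) :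
    u ⬝ᵥ (Gamma g).mulVec w = (Gamma g).mulVec u ⬝ᵥ w := by
  rw [Matrix.dotProduct_mulVec, ← Matrix.mulVec_transpose, gamma_transpose]

lemma pair_eq_pair {α : Type*} [DecidableEq α] {a b c e : α}
    (h : ({a, b} : Finset α) = {c, e}) : (a = c ∧ b = e) ∨ (a = e ∧ b = c) := by
  have ha : a = c ∨ a = e := by
    have : a ∈ ({c, e} : Finset α) := h ▸ (by simp : a ∈ ({a, b} : Finset α))
    simpa using this
  have hb : b = c ∨ b = e := by
    have : b ∈ ({c, e} : Finset α) := h ▸ (by simp : b ∈ ({a, b} : Finset α))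
    simpa using this
  have hc : c = a ∨ c = b := by
    have : c ∈ ({a, b} : Finset α) := h.symm ▸ (by simp : c ∈ ({c, e} : Finset α))
    simpa using this
  have he : e = a ∨ e = b := by
    have : e ∈ ({a, b} : Finset α) := h.symm ▸ (by simp : e ∈ ({c, e} : Finset α))
    simpa using this
  rcases ha with rfl | rfl <;> rcases hb with rfl | rfl <;> tauto

lemma ext_pair {s t : PairIdx d}
    (h : ({s.1.1, s.1.2} : Finset (Fin d)) = {t.1.1, t.1.2}) : s = t := by
  rcases pair_eq_pair h with ⟨h1, h2⟩ | ⟨h1, h2⟩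
  · exact Subtype.ext (Prod.ext h1 h2)
  · exfalso
    have hs := s.2
    have ht := t.2
    rw [h1, h2] at hs
    exact lt_asymm hs ht

/-- The permutation of `PairIdx d` induced by a permutation of `Fin d`. -/
def pmap (π : Equiv.Perm (Fin d)) (s : PairIdx d) : PairIdx d :=
  if h : π s.1.1 < π s.1.2 then ⟨(π s.1.1, π s.1.2), h⟩
  else ⟨(π s.1.2, π s.1.1),
    lt_of_le_of_ne (not_lt.mp h) (fun he => s.2.ne (π.injective he).symm)⟩

lemma pmap_set (π : Equiv.Perm (Fin d)) (s : PairIdx d) :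
    ({(pmap π s).1.1, (pmap π s).1.2} : Finset (Fin d)) = {π s.1.1, π s.1.2} := by
  unfold pmap
  split
  · rfl
  · exact Finset.pair_comm _ _

lemma pmap_inj (π : Equiv.Perm (Fin d)) : Function.Injective (pmap π) := by
  intro s t h
  apply ext_pair
  have h2 : ({π s.1.1, π s.1.2} : Finset (Fin d)) = {π t.1.1, π t.1.2} := by
    rw [← pmap_set π s, ← pmap_set π t, h]
  rcases pair_eq_pair h2 with ⟨h3, h4⟩ | ⟨h3, h4⟩
  · rw [π.injective h3, π.injective h4]
  · rw [π.injective h3, π.injective h4]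
    exact Finset.pair_comm _ _

lemma pmap_sameBlock {g : Fin d → Fin K} {π : Equiv.Perm (Fin d)}
    (hπ : ∀ i, g (π i) = g i) (s : PairIdx d) : sameBlock g (pmap π s) s := by
  unfold pmap
  split
  · exact Or.inl ⟨hπ _, hπ _⟩
  · exact Or.inr ⟨hπ _, hπ _⟩

lemma pmap_overlap {g : Fin d → Fin K} {π : Equiv.Perm (Fin d)}
    (hπ : ∀ i, g (π i) = g i) (r s : PairIdx d) :
    overlap g (pmap π r) (pmap π s) = overlap g r s := by
  unfold overlap
  rw [pmap_set, pmap_set]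
  have h1 : ({π r.1.1, π r.1.2} : Finset (Fin d))
      = Finset.image π {r.1.1, r.1.2} := by
    simp [Finset.image_insert]
  have h2 : ({π s.1.1, π s.1.2} : Finset (Fin d))
      = Finset.image π {s.1.1, s.1.2} := by
    simp [Finset.image_insert]
  rw [h1, h2, ← Finset.image_inter _ _ π.injective,
    Finset.image_val_of_injOn (π.injective.injOn), Multiset.map_map]
  exact Multiset.map_congr rfl (fun x _ => hπ x)

lemma g_swap {g : Fin d → Fin K} {a b : Fin d} (h : g a = g b) (i : Fin d) :
    g (Equiv.swap a b i) = g i := by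
  rcases eq_or_ne i a with rfl | ha
  · rw [Equiv.swap_apply_left]; exact h.symm
  rcases eq_or_ne i b with rfl | hb
  · rw [Equiv.swap_apply_right]; exact h
  · rw [Equiv.swap_apply_of_ne_of_ne ha hb]

lemma exists_perm (g : Fin d → Fin K) {x1 x2 y1 y2 : Fin d}
    (hx : x1 ≠ x2) (hy : y1 ≠ y2) (h1 : g x1 = g y1) (h2 : g x2 = g y2) :
    ∃ π : Equiv.Perm (Fin d), (∀ i, g (π i) = g i) ∧ π x1 = y1 ∧ π x2 = y2 := by
  set τ := Equiv.swap x1 y1 with hτ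
  have hgτ : ∀ i, g (τ i) = g i := g_swap h1
  set x2' := τ x2 with hx2'
  have hgx2' : g x2' = g y2 := (hgτ x2).trans h2
  have hy1x2' : y1 ≠ x2' := by
    intro hc
    apply hx
    have : τ y1 = τ x2' := congrArg τ hc
    rw [hx2'] at this
    rw [hτ] at this
    simp only [Equiv.swap_apply_right, Equiv.swap_apply_self] at this
    exact this
  refine ⟨τ.trans (Equiv.swap x2' y2), fun i => ?_, ?_, ?_⟩
  · simp only [Equiv.trans_apply]
    rw [g_swap hgx2', hgτ]
  · simp only [Equiv.trans_apply]
    have hτx1 : τ x1 = y1 := Equiv.swap_apply_left _ _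
    rw [hτx1, Equiv.swap_apply_of_ne_of_ne hy1x2' hy]
  · simp only [Equiv.trans_apply]
    rw [← hx2', Equiv.swap_apply_left]

lemma mulVec_blockConst {g : Fin d → Fin K} (M : Matrix (PairIdx d) (PairIdx d) ℝ)
    (hM : ∀ r r' s s' : PairIdx d, sameBlock g r r' → sameBlock g s s' →
      overlap g r s = overlap g r' s' → M r s = M r' s')
    (z : PairIdx d → ℝ) (hz : ∀ r s, sameBlock g r s → z r = z s)
    {r r' : PairIdx d} (h : sameBlock g r r') :
    M.mulVec z r = M.mulVec z r' := by
  obtain ⟨π, hπ, hpr⟩ : ∃ π : Equiv.Perm (Fin d),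
      (∀ i, g (π i) = g i) ∧ pmap π r = r' := by
    rcases h with ⟨h1, h2⟩ | ⟨h1, h2⟩
    · obtain ⟨π, hπ, e1, e2⟩ := exists_perm g r.2.ne r'.2.ne h1 h2
      exact ⟨π, hπ, ext_pair (by rw [pmap_set, e1, e2])⟩
    · obtain ⟨π, hπ, e1, e2⟩ := exists_perm g r.2.ne r'.2.ne' h1 h2
      exact ⟨π, hπ, ext_pair (by rw [pmap_set, e1, e2]; exact Finset.pair_comm _ _)⟩
  have hbij : Function.Bijective (pmap π) :=
    Finite.injective_iff_bijective.mp (pmap_inj π)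
  simp only [Matrix.mulVec, dotProduct]
  rw [← hbij.sum_comp (fun t => M r' t * z t)]
  refine Finset.sum_congr rfl fun t _ => ?_
  rw [← hpr,
    hM (pmap π r) r (pmap π t) t (pmap_sameBlock hπ r) (pmap_sameBlock hπ t)
      (pmap_overlap hπ r t),
    hz (pmap π t) t (pmap_sameBlock hπ t)]

end Aux

/-- Let `𝒢†` (cluster map `g'`) be a refinement of `𝒢` (cluster map `g`),
with blockwise-averaging matrices `Γ = Gamma g` and `Γ† = Gamma g'` on the same pair set.
For every `M ∈ 𝒮_{𝒢†}` and every vector `x`, the quadratic-loss decomposition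
`(x − Γx)ᵀ M (x − Γx) = (x − Γ†x)ᵀ M (x − Γ†x) + (Γ†x − Γx)ᵀ M (Γ†x − Γx)` holds. -/


theorem statement_19 {d K K' : ℕ} (hd : 2 ≤ d) (hK : 1 ≤ K) (hK' : 1 ≤ K')
    (g : Fin d → Fin K) (hg : Function.Surjective g)
    (g' : Fin d → Fin K') (hg' : Function.Surjective g')
    (href : ∀ i j : Fin d, g' i = g' j → g i = g j)
    (M : Matrix (PairIdx d) (PairIdx d) ℝ) (hM : inSG g' M)
    (x : PairIdx d → ℝ) :
    (x - (Gamma g).mulVec x) ⬝ᵥ M.mulVec (x - (Gamma g).mulVec x)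
      = (x - (Gamma g').mulVec x) ⬝ᵥ M.mulVec (x - (Gamma g').mulVec x)
        + ((Gamma g').mulVec x - (Gamma g).mulVec x) ⬝ᵥ
            M.mulVec ((Gamma g').mulVec x - (Gamma g).mulVec x) := by
  obtain ⟨hMs, hMi⟩ := hM
  have hsb : ∀ r s : PairIdx d, sameBlock g' r s → sameBlock g r s := by
    intro r s h
    rcases h with ⟨h1, h2⟩ | ⟨h1, h2⟩
    · exact Or.inl ⟨href _ _ h1, href _ _ h2⟩
    · exact Or.inr ⟨href _ _ h1, href _ _ h2⟩
  set G := (Gamma g).mulVec x with hG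
  set G' := (Gamma g').mulVec x with hG'
  have hGbc : ∀ r s, sameBlock g' r s → G r = G s :=
    fun r s h => gamma_bc x (hsb r s h)
  have hG'bc : ∀ r s, sameBlock g' r s → G' r = G' s :=
    fun r s h => gamma_bc x h
  have hvbc : ∀ r s, sameBlock g' r s → (G' - G) r = (G' - G) s := by
    intro r s h
    simp only [Pi.sub_apply, hG'bc r s h, hGbc r s h]
  have hw : ∀ r s, sameBlock g' r s → M.mulVec (G' - G) r = M.mulVec (G' - G) s :=
    fun r s h => mulVec_blockConst M hMi _ hvbc h
  have hu0 : (Gamma g').mulVec (x - G') = 0 := by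
    rw [Matrix.mulVec_sub, hG', gamma_fix hG'bc, sub_self]
  have hcross : (x - G') ⬝ᵥ M.mulVec (G' - G) = 0 := by
    conv_lhs => rw [← gamma_fix hw]
    rw [gamma_dot_comm, hu0, zero_dotProduct]
  have hcross2 : (G' - G) ⬝ᵥ M.mulVec (x - G') = 0 := by
    rw [Matrix.dotProduct_mulVec, ← Matrix.mulVec_transpose, hMs.eq,
      dotProduct_comm]
    exact hcross
  have hsplit : x - G = (x - G') + (G' - G) := (sub_add_sub_cancel x G' G).symm
  rw [hsplit, Matrix.mulVec_add, add_dotProduct, dotProduct_add,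
    dotProduct_add, hcross, hcross2]
  ring
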